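/- In the sequent calculus of Horn PCL (intuitionistic logic extended with contractual implication ↠ and rules Zero, Fix, PrePost), weakening is admissible: if Γ ⊢ p is derivable (without cut and weakR), then Γ, Γ' ⊢ p is derivable for every multiset Γ', and moreover a derivation exists ending with the same last rule. -/
import Mathlib


/-- Formulae of Propositional Contract Logic: atoms, ⊥, ⊤, ¬, ∧, ∨, →, and the
contractual implication ↠ (`cimp`). -/
inductive PCLForm where
  | atom : ℕ → PCLForm
  | bot : PCLForm
  | top : PCLForm
  | neg : PCLForm → PCLForm
  | conj : PCLForm → PCLForm → PCLForm
  | disj : PCLForm → PCLForm → PCLForm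
  | imp : PCLForm → PCLForm → PCLForm
  | cimp : PCLForm → PCLForm → PCLForm
deriving DecidableEq

/-- The names of the rules of the PCL sequent calculus (cut and weakR excluded). -/
inductive PCLRule where
  | id | andL1 | andL2 | andR | orL | orR1 | orR2 | impL | impR
  | negL | negR | botL | topR | zero | fix | prepost
deriving DecidableEq

/-- `Der r Γ p` : the sequent `Γ ⊢ p` is derivable in the cut-free, weakR-free
sequent calculus of PCL by a derivation whose last rule is `r`.  Contexts are
multisets and each left rule keeps its principal formula in the context. -/
inductive Der : PCLRule → Multiset PCLForm → PCLForm → Prop where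
  | id (Γ p) : Der .id (p ::ₘ Γ) p
  | andL1 {r Γ p q c} : Der r (p ::ₘ (PCLForm.conj p q) ::ₘ Γ) c →
      Der .andL1 ((PCLForm.conj p q) ::ₘ Γ) c
  | andL2 {r Γ p q c} : Der r (q ::ₘ (PCLForm.conj p q) ::ₘ Γ) c →
      Der .andL2 ((PCLForm.conj p q) ::ₘ Γ) c
  | andR {r1 r2 Γ p q} : Der r1 Γ p → Der r2 Γ q → Der .andR Γ (PCLForm.conj p q)
  | orL {r1 r2 Γ p q c} : Der r1 (p ::ₘ (PCLForm.disj p q) ::ₘ Γ) c →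
      Der r2 (q ::ₘ (PCLForm.disj p q) ::ₘ Γ) c →
      Der .orL ((PCLForm.disj p q) ::ₘ Γ) c
  | orR1 {r Γ p q} : Der r Γ p → Der .orR1 Γ (PCLForm.disj p q)
  | orR2 {r Γ p q} : Der r Γ q → Der .orR2 Γ (PCLForm.disj p q)
  | impL {r1 r2 Γ p q c} : Der r1 ((PCLForm.imp p q) ::ₘ Γ) p →
      Der r2 (q ::ₘ (PCLForm.imp p q) ::ₘ Γ) c →
      Der .impL ((PCLForm.imp p q) ::ₘ Γ) c
  | impR {r Γ p q} : Der r (p ::ₘ Γ) q → Der .impR Γ (PCLForm.imp p q)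
  | negL {r Γ p c} : Der r ((PCLForm.neg p) ::ₘ Γ) p →
      Der .negL ((PCLForm.neg p) ::ₘ Γ) c
  | negR {r Γ p} : Der r (p ::ₘ Γ) PCLForm.bot → Der .negR Γ (PCLForm.neg p)
  | botL (Γ p) : Der .botL (PCLForm.bot ::ₘ Γ) p
  | topR (Γ) : Der .topR Γ PCLForm.top
  | zero {r Γ p q} : Der r Γ q → Der .zero Γ (PCLForm.cimp p q)
  | fix {r1 r2 Γ p q c} : Der r1 (c ::ₘ (PCLForm.cimp p q) ::ₘ Γ) p →
      Der r2 (q ::ₘ (PCLForm.cimp p q) ::ₘ Γ) c →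
      Der .fix ((PCLForm.cimp p q) ::ₘ Γ) c
  | prepost {r1 r2 Γ p q a b} : Der r1 (a ::ₘ (PCLForm.cimp p q) ::ₘ Γ) p →
      Der r2 (q ::ₘ (PCLForm.cimp p q) ::ₘ Γ) b →
      Der .prepost ((PCLForm.cimp p q) ::ₘ Γ) (PCLForm.cimp a b)

/-- Weakening is admissible in cut-free, weakR-free PCL, and the weakened
sequent admits a derivation ending with the same last rule. -/
theorem pcl_weakening_same_last_rule (r : PCLRule) (Γ : Multiset PCLForm)
    (p : PCLForm) (h : Der r Γ p) (Γ' : Multiset PCLForm) :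
    Der r (Γ + Γ') p := by
  induction h generalizing Γ' with
  | id Γ p => rw [Multiset.cons_add]; exact Der.id _ _
  | andL1 h ih => rw [Multiset.cons_add]; exact Der.andL1 (by simpa [Multiset.cons_add] using ih Γ')
  | andL2 h ih => rw [Multiset.cons_add]; exact Der.andL2 (by simpa [Multiset.cons_add] using ih Γ')
  | andR h1 h2 ih1 ih2 => exact Der.andR (ih1 Γ') (ih2 Γ')
  | orL h1 h2 ih1 ih2 =>
      rw [Multiset.cons_add]
      exact Der.orL (by simpa [Multiset.cons_add] using ih1 Γ')
        (by simpa [Multiset.cons_add] using ih2 Γ')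
  | orR1 h ih => exact Der.orR1 (ih Γ')
  | orR2 h ih => exact Der.orR2 (ih Γ')
  | impL h1 h2 ih1 ih2 =>
      rw [Multiset.cons_add]
      exact Der.impL (by simpa [Multiset.cons_add] using ih1 Γ')
        (by simpa [Multiset.cons_add] using ih2 Γ')
  | impR h ih => exact Der.impR (by simpa [Multiset.cons_add] using ih Γ')
  | negL h ih => rw [Multiset.cons_add]; exact Der.negL (by simpa [Multiset.cons_add] using ih Γ')
  | negR h ih => exact Der.negR (by simpa [Multiset.cons_add] using ih Γ')
  | botL Γ p => rw [Multiset.cons_add]; exact Der.botL _ _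
  | topR Γ => exact Der.topR _
  | zero h ih => exact Der.zero (ih Γ')
  | fix h1 h2 ih1 ih2 =>
      rw [Multiset.cons_add]
      exact Der.fix (by simpa [Multiset.cons_add] using ih1 Γ')
        (by simpa [Multiset.cons_add] using ih2 Γ')
  | prepost h1 h2 ih1 ih2 =>
      rw [Multiset.cons_add]
      exact Der.prepost (by simpa [Multiset.cons_add] using ih1 Γ')
        (by simpa [Multiset.cons_add] using ih2 Γ')
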